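/- Let H, A be skew co-paired Hopf algebras with left co-integral ∫_H on H. Then (∫_H ⊗ id)σ = (∫_H ⊗ id ⊗ id)(σ₂₃^{±1}·σ₁₃), i.e. both with σ₂₃ and with σ₂₃⁻¹ inserted, the triple-tensor expression reduces to the pairing integral. -/

import Mathlib

/-!
Write `c = (∫_H ⊗ id)σ` and `e = (ε ⊗ id)σ`. Slanting `(Δ ⊗ id)σ = σ₁₃σ₂₃` by the left
co-integral in the middle leg gives `σ(1 ⊗ c) = 1 ⊗ c`, while `(∫_H ⊗ id ⊗ id)(τ₂₃σ₁₃) = τ(1 ⊗ c)`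
for every `τ`; taking `τ = σ` gives the first identity. Slanting the same identity by `ε` in the
first leg gives `(1 ⊗ e)σ = σ`, and applying `m(S ⊗ id) ⊗ id` to it gives `σ⁻¹σ = 1 ⊗ e`. Hence
`σ⁻¹(1 ⊗ c) = σ⁻¹σσ(1 ⊗ c) = (1 ⊗ e)σ(1 ⊗ c) = 1 ⊗ c`.
-/

open TensorProduct

namespace Stmt7

variable {K H A : Type*} [Field K] [Ring H] [Ring A] [HopfAlgebra K H] [HopfAlgebra K A]

noncomputable def s13HHA (σ : H ⊗[K] A) : H ⊗[K] (H ⊗[K] A) :=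
  TensorProduct.map LinearMap.id (TensorProduct.mk K H A 1) σ

noncomputable def s23HHA (σ : H ⊗[K] A) : H ⊗[K] (H ⊗[K] A) := (1 : H) ⊗ₜ[K] σ

noncomputable def s13HAA (σ : H ⊗[K] A) : H ⊗[K] (A ⊗[K] A) :=
  TensorProduct.map LinearMap.id (TensorProduct.mk K A A 1) σ

noncomputable def s12HAA (σ : H ⊗[K] A) : H ⊗[K] (A ⊗[K] A) :=
  TensorProduct.map LinearMap.id ((TensorProduct.mk K A A).flip 1) σ

noncomputable def idComul : H ⊗[K] A →ₗ[K] H ⊗[K] (A ⊗[K] A) :=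
  LinearMap.lTensor H (Coalgebra.comul : A →ₗ[K] A ⊗[K] A)

noncomputable def comulId : H ⊗[K] A →ₗ[K] H ⊗[K] (H ⊗[K] A) :=
  (TensorProduct.assoc K H H A).toLinearMap ∘ₗ
    LinearMap.rTensor A (Coalgebra.comul : H →ₗ[K] H ⊗[K] H)

/-- Left invariance of a co-integral `∫ : H → K`: `(id ⊗ ∫)∘Δ = 1_H·∫`. -/
def IsLeftCoIntegral {R M : Type*} [Field R] [Ring M] [Bialgebra R M]
    (f : M →ₗ[R] R) : Prop :=
  ∀ m : M, (TensorProduct.rid R M)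
      (LinearMap.lTensor M f ((Coalgebra.comul : M →ₗ[R] M ⊗[R] M) m)) = f m • (1 : M)

/-- The normalization `μ := (∫_H ⊗ ∫_A)σ`. -/
noncomputable def mu (intH : H →ₗ[K] K) (intA : A →ₗ[K] K) (σ : H ⊗[K] A) : K :=
  (TensorProduct.lid K K) (TensorProduct.map intH intA σ)

/-- The delta element `δ̂_A := ν • (∫_H ⊗ id)σ`, where `ν` is a square root of `μ⁻¹`. -/
noncomputable def deltaA (intH : H →ₗ[K] K) (ν : K) (σ : H ⊗[K] A) : A :=
  ν • (TensorProduct.lid K A) (LinearMap.rTensor A intH σ)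


/-- `σ⁻¹ := (S_H ⊗ id)σ`. -/
noncomputable def sInv (σ : H ⊗[K] A) : H ⊗[K] A :=
  LinearMap.rTensor A (HopfAlgebra.antipode K : H →ₗ[K] H) σ

/-- `(∫_H ⊗ id ⊗ id) : H ⊗ H ⊗ A → H ⊗ A`, integrating the first leg. -/
noncomputable def intLeg1 (intH : H →ₗ[K] K) : H ⊗[K] (H ⊗[K] A) →ₗ[K] H ⊗[K] A :=
  (TensorProduct.lid K (H ⊗[K] A)).toLinearMap ∘ₗ LinearMap.rTensor (H ⊗[K] A) intH

noncomputable def slant (f : H →ₗ[K] K) : H ⊗[K] A →ₗ[K] A :=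
  (TensorProduct.lid K A).toLinearMap ∘ₗ LinearMap.rTensor A f

noncomputable def slantMiddle (f : H →ₗ[K] K) : H ⊗[K] (H ⊗[K] A) →ₗ[K] H ⊗[K] A :=
  LinearMap.lTensor H (slant f)

noncomputable def mulAntipodeLeft : H ⊗[K] (H ⊗[K] A) →ₗ[K] H ⊗[K] A :=
  LinearMap.rTensor A (LinearMap.mul' K H ∘ₗ
      LinearMap.rTensor H (HopfAlgebra.antipode K : H →ₗ[K] H)) ∘ₗ
    (TensorProduct.assoc K H H A).symm.toLinearMap

@[simp]
lemma slant_tmul (f : H →ₗ[K] K) (h : H) (a : A) : slant f (h ⊗ₜ[K] a) = f h • a := by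
  simp [slant]

@[simp]
lemma s13HHA_tmul (h : H) (a : A) :
    s13HHA (K := K) (h ⊗ₜ[K] a) = h ⊗ₜ[K] ((1 : H) ⊗ₜ[K] a) := by
  simp [s13HHA]

lemma s13HHA_add (x y : H ⊗[K] A) : s13HHA (x + y) = s13HHA x + s13HHA y :=
  map_add _ x y

lemma s23HHA_add (x y : H ⊗[K] A) : s23HHA (x + y) = s23HHA x + s23HHA y :=
  tmul_add _ x y

lemma sInv_add (x y : H ⊗[K] A) : sInv (x + y) = sInv x + sInv y :=
  map_add _ x y

lemma comulId_tmul (h : H) (a : A) :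
    comulId (K := K) (h ⊗ₜ[K] a) =
      TensorProduct.assoc K H H A (Coalgebra.comul h ⊗ₜ[K] a) := rfl

lemma slantMiddle_assoc_tmul (f : H →ₗ[K] K) (y : H ⊗[K] H) (a : A) :
    slantMiddle f (TensorProduct.assoc K H H A (y ⊗ₜ[K] a)) =
      TensorProduct.rid K H (LinearMap.lTensor H f y) ⊗ₜ[K] a := by
  induction y using TensorProduct.induction_on with
  | zero => simp
  | tmul h g => simp [slantMiddle, smul_tmul]
  | add u v hu hv => simp only [map_add, add_tmul, hu, hv]

lemma intLeg1_assoc_tmul (f : H →ₗ[K] K) (y : H ⊗[K] H) (a : A) :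
    intLeg1 f (TensorProduct.assoc K H H A (y ⊗ₜ[K] a)) =
      TensorProduct.lid K H (LinearMap.rTensor H f y) ⊗ₜ[K] a := by
  induction y using TensorProduct.induction_on with
  | zero => simp
  | tmul h g => simp [intLeg1, smul_tmul']
  | add u v hu hv => simp only [map_add, add_tmul, hu, hv]

lemma slantMiddle_comulId {f : H →ₗ[K] K} (hf : IsLeftCoIntegral f) (x : H ⊗[K] A) :
    slantMiddle f (comulId x) = (1 : H) ⊗ₜ[K] slant f x := by
  induction x using TensorProduct.induction_on with
  | zero => simp
  | tmul h a => rw [comulId_tmul, slantMiddle_assoc_tmul, hf h, slant_tmul, smul_tmul]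
  | add u v hu hv => rw [map_add, map_add, hu, hv, map_add, tmul_add]

lemma intLeg1_counit_comulId (x : H ⊗[K] A) :
    intLeg1 Coalgebra.counit (comulId (K := K) x) = x := by
  induction x using TensorProduct.induction_on with
  | zero => simp
  | tmul h a => simp [comulId_tmul, intLeg1_assoc_tmul, Coalgebra.rTensor_counit_comul]
  | add u v hu hv => rw [map_add, map_add, hu, hv]

lemma mulAntipodeLeft_comulId (x : H ⊗[K] A) :
    mulAntipodeLeft (comulId (K := K) x) = (1 : H) ⊗ₜ[K] slant Coalgebra.counit x := by
  induction x using TensorProduct.induction_on with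
  | zero => simp
  | tmul h a =>
      simp [mulAntipodeLeft, comulId_tmul, HopfAlgebra.mul_antipode_rTensor_comul_apply,
        Algebra.algebraMap_eq_smul_one, smul_tmul]
  | add u v hu hv => rw [map_add, map_add, hu, hv, map_add, tmul_add]

lemma slantMiddle_s13HHA_mul_s23HHA (f : H →ₗ[K] K) (x y : H ⊗[K] A) :
    slantMiddle f (s13HHA x * s23HHA y) = x * ((1 : H) ⊗ₜ[K] slant f y) := by
  induction x using TensorProduct.induction_on with
  | zero => simp [s13HHA]
  | add u v hu hv => rw [s13HHA_add, add_mul, map_add, hu, hv, add_mul]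
  | tmul h a =>
      induction y using TensorProduct.induction_on with
      | zero => simp [s23HHA]
      | add u v hu hv => rw [s23HHA_add, mul_add, map_add, hu, hv, map_add, tmul_add, mul_add]
      | tmul g b => simp [s23HHA, slantMiddle]

lemma intLeg1_s23HHA_mul_s13HHA (f : H →ₗ[K] K) (x y : H ⊗[K] A) :
    intLeg1 f (s23HHA y * s13HHA x) = y * ((1 : H) ⊗ₜ[K] slant f x) := by
  induction x using TensorProduct.induction_on with
  | zero => simp [s13HHA]
  | add u v hu hv => rw [s13HHA_add, mul_add, map_add, hu, hv, map_add, tmul_add, mul_add]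
  | tmul h a =>
      induction y using TensorProduct.induction_on with
      | zero => simp [s23HHA]
      | add u v hu hv => rw [s23HHA_add, add_mul, map_add, hu, hv, add_mul]
      | tmul g b => simp [s23HHA, intLeg1]

lemma intLeg1_s13HHA_mul_s23HHA (f : H →ₗ[K] K) (x y : H ⊗[K] A) :
    intLeg1 f (s13HHA x * s23HHA y) = ((1 : H) ⊗ₜ[K] slant f x) * y := by
  induction x using TensorProduct.induction_on with
  | zero => simp [s13HHA]
  | add u v hu hv => rw [s13HHA_add, add_mul, map_add, hu, hv, map_add, tmul_add, add_mul]
  | tmul h a =>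
      induction y using TensorProduct.induction_on with
      | zero => simp [s23HHA]
      | add u v hu hv => rw [s23HHA_add, mul_add, map_add, hu, hv, mul_add]
      | tmul g b => simp [s23HHA, intLeg1]

lemma mulAntipodeLeft_s13HHA_mul_s23HHA (x y : H ⊗[K] A) :
    mulAntipodeLeft (s13HHA x * s23HHA y) = sInv x * y := by
  induction x using TensorProduct.induction_on with
  | zero => simp [s13HHA, sInv]
  | add u v hu hv => rw [s13HHA_add, add_mul, map_add, hu, hv, sInv_add, add_mul]
  | tmul h a =>
      induction y using TensorProduct.induction_on with
      | zero => simp [s23HHA]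
      | add u v hu hv => rw [s23HHA_add, mul_add, map_add, hu, hv, mul_add]
      | tmul g b => simp [s23HHA, sInv, mulAntipodeLeft]

section Copairing

variable {σ : H ⊗[K] A} (hcop : comulId σ = s13HHA σ * s23HHA σ)
include hcop

lemma mul_one_tmul_slant {f : H →ₗ[K] K} (hf : IsLeftCoIntegral f) :
    σ * ((1 : H) ⊗ₜ[K] slant f σ) = (1 : H) ⊗ₜ[K] slant f σ := by
  rw [← slantMiddle_s13HHA_mul_s23HHA, ← hcop, slantMiddle_comulId hf]

lemma one_tmul_slant_counit_mul :
    ((1 : H) ⊗ₜ[K] slant Coalgebra.counit σ) * σ = σ := by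
  rw [← intLeg1_s13HHA_mul_s23HHA, ← hcop, intLeg1_counit_comulId]

lemma sInv_mul_self : sInv σ * σ = (1 : H) ⊗ₜ[K] slant Coalgebra.counit σ := by
  rw [← mulAntipodeLeft_s13HHA_mul_s23HHA, ← hcop, mulAntipodeLeft_comulId]

end Copairing

theorem statement7_general (σ : H ⊗[K] A)
    (hcop2 : comulId (K := K) σ = s13HHA σ * s23HHA σ)
    (intH : H →ₗ[K] K) (hintH : IsLeftCoIntegral intH) :
    (1 : H) ⊗ₜ[K] ((TensorProduct.lid K A) (LinearMap.rTensor A intH σ)) =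
        intLeg1 intH (s23HHA σ * s13HHA σ) ∧
      (1 : H) ⊗ₜ[K] ((TensorProduct.lid K A) (LinearMap.rTensor A intH σ)) =
        intLeg1 intH (s23HHA (sInv σ) * s13HHA σ) := by
  change (1 : H) ⊗ₜ[K] slant intH σ = _ ∧ (1 : H) ⊗ₜ[K] slant intH σ = _
  set c := (1 : H) ⊗ₜ[K] slant intH σ
  set e := (1 : H) ⊗ₜ[K] slant (Coalgebra.counit : H →ₗ[K] K) σ
  have hc : σ * c = c := mul_one_tmul_slant hcop2 hintH
  have he : e * σ = σ := one_tmul_slant_counit_mul hcop2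
  have hS : sInv σ * σ = e := sInv_mul_self hcop2
  rw [intLeg1_s23HHA_mul_s13HHA, intLeg1_s23HHA_mul_s13HHA]
  refine ⟨hc.symm, ?_⟩
  calc c = e * σ * c := by rw [he, hc]
    _ = sInv σ * σ * σ * c := by rw [hS]
    _ = sInv σ * c := by rw [mul_assoc, mul_assoc, hc, hc]

/-- `(∫_H ⊗ id)σ = (∫_H ⊗ id ⊗ id)(σ₂₃^{±1}·σ₁₃)`, both with `σ₂₃` and with
`σ₂₃⁻¹` inserted (the left-hand side embedded into `H ⊗ A` via the unit of the left
over `H` factor). -/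
theorem statement7 (σ : H ⊗[K] A) (hσ : IsUnit σ)
    (hcop1 : idComul (K := K) σ = s13HAA σ * s12HAA σ)
    (hcop2 : comulId (K := K) σ = s13HHA σ * s23HHA σ)
    (intH : H →ₗ[K] K) (hintH : IsLeftCoIntegral intH) :
    (1 : H) ⊗ₜ[K] ((TensorProduct.lid K A) (LinearMap.rTensor A intH σ)) =
        intLeg1 intH (s23HHA σ * s13HHA σ) ∧
      (1 : H) ⊗ₜ[K] ((TensorProduct.lid K A) (LinearMap.rTensor A intH σ)) =
        intLeg1 intH (s23HHA (sInv σ) * s13HHA σ) :=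
  statement7_general σ hcop2 intH hintH

end Stmt7
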